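/- For any integer s ≥ 1, 6s ≤ N_2(K(3;3s)) ≤ 8s − 1, where K(3;3s) is the complete 3s-partite graph with all parts of size 3. -/

import Mathlib

def isAddressing {V : Type*} (G : SimpleGraph V) (N : ℕ)
    (f : V → Fin N → Option Bool) : Prop :=
  ∀ u v : V, G.dist u v =
    (Finset.univ.filter fun j : Fin N =>
      ∃ a b : Bool, f u j = some a ∧ f v j = some b ∧ a ≠ b).card

def multipartiteGraph (a m : ℕ) : SimpleGraph (Fin m × Fin a) where
  Adj u v := u.1 ≠ v.1
  symm := ⟨fun _ _ h => h.symm⟩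
  loopless := ⟨fun _ h => h rfl⟩

/-!
Lower bound (the eigenvalue bound). If `x` has vanishing sum on every part of `K(a;m)`, then
`∑ d(u,v) x_u x_v = -2 ∑ x_v²`, so this quadratic form is negative definite on a subspace of
dimension `m(a-1)`. An addressing of length `N` writes the same form as `∑_j 2 F_j(x) T_j(x)`,
where `F_j(x)` and `T_j(x)` sum `x` over the vertices whose `j`-th entry is `0`, resp. `1`
(`some false`, `some true`; `none` is `*`). The
form therefore vanishes on the intersection of the `N` hyperplanes `F_j = 0`, which meets the
negative definite subspace only in `0`; hence `m(a-1) ≤ N`.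

Upper bound (blow-up). Give each of the `s` copies of `K(3;3)` its own block of `7` coordinates,
filled with the explicit addressing of `K(3;3)` and with `*` in the other blocks, and separate the
copies by the standard addressing of `K_s` of length `s - 1`.
-/

open Finset Module

section AddrDist

variable {V ι κ : Type*} [Fintype ι] [Fintype κ]

def addrDist (f : V → ι → Option Bool) (u v : V) : ℕ :=
  #{j | ∃ a b : Bool, f u j = some a ∧ f v j = some b ∧ a ≠ b}

theorem isAddressing_iff {G : SimpleGraph V} {N : ℕ} {f : V → Fin N → Option Bool} :
    isAddressing G N f ↔ ∀ u v, G.dist u v = addrDist f u v :=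
  Iff.rfl

theorem addrDist_comm (f : V → ι → Option Bool) (u v : V) :
    addrDist f u v = addrDist f v u := by
  unfold addrDist
  congr 1
  ext j
  simp only [mem_filter, mem_univ, true_and]
  exact ⟨fun ⟨a, b, ha, hb, hab⟩ => ⟨b, a, hb, ha, hab.symm⟩,
    fun ⟨a, b, ha, hb, hab⟩ => ⟨b, a, hb, ha, hab.symm⟩⟩

@[simp]
theorem addrDist_self (f : V → ι → Option Bool) (v : V) : addrDist f v v = 0 := by
  simp only [addrDist, card_eq_zero, filter_eq_empty_iff]
  rintro j - ⟨a, b, ha, hb, hab⟩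
  exact hab (Option.some.inj (ha.symm.trans hb))

theorem addrDist_comp {W : Type*} (f : W → ι → Option Bool) (β : V → W) (u v : V) :
    addrDist (fun w => f (β w)) u v = addrDist f (β u) (β v) :=
  rfl

theorem addrDist_comp_equiv (f : V → ι → Option Bool) (e : κ ≃ ι) (u v : V) :
    addrDist (fun w j => f w (e j)) u v = addrDist f u v :=
  card_equiv e (by simp)

theorem addrDist_sumElim (f : V → ι → Option Bool) (g : V → κ → Option Bool) (u v : V) :
    addrDist (fun w => Sum.elim (f w) (g w)) u v = addrDist f u v + addrDist g u v := by
  simp only [addrDist, card_filter, Fintype.sum_sum_type, Sum.elim_inl, Sum.elim_inr]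
  rfl

theorem addrDist_mask [DecidableEq κ] (β : V → κ) (f : V → ι → Option Bool) (u v : V) :
    addrDist (fun w (kj : κ × ι) => if kj.1 = β w then f w kj.2 else none) u v =
      if β u = β v then addrDist f u v else 0 := by
  simp only [addrDist, card_filter, Fintype.sum_prod_type]
  split_ifs with h
  · rw [sum_eq_single (β u)]
    · simp [h]
    · intro k _ hk
      simp [hk]
    · simp
  · refine sum_eq_zero fun k _ => sum_eq_zero fun j _ => if_neg ?_
    rintro ⟨a, b, ha, hb, -⟩
    split_ifs at ha hb with hu hv
    exact h (hu.symm.trans hv)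

end AddrDist

def completeGraphAddr (s : ℕ) (k : Fin s) (j : Fin (s - 1)) : Option Bool :=
  if j.val < k.val then some true else if j.val = k.val then some false else none

theorem addrDist_completeGraphAddr_of_lt {s : ℕ} {k l : Fin s} (hkl : k < l) :
    addrDist (completeGraphAddr s) k l = 1 := by
  rw [addrDist, card_eq_one]
  refine ⟨⟨k, by omega⟩, ?_⟩
  ext j
  rw [mem_filter_univ]
  simp only [mem_singleton, completeGraphAddr, Fin.ext_iff]
  split_ifs <;> simp <;> omega

theorem isAddressing_completeGraphAddr (s : ℕ) :
    isAddressing (⊤ : SimpleGraph (Fin s)) (s - 1) (completeGraphAddr s) := by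
  intro k l
  rw [SimpleGraph.dist_top]
  rcases lt_trichotomy k l with h | rfl | h
  · rw [if_neg h.ne, ← addrDist, addrDist_completeGraphAddr_of_lt h]
  · rw [if_pos rfl, ← addrDist, addrDist_self]
  · rw [if_neg h.ne', ← addrDist, addrDist_comm, addrDist_completeGraphAddr_of_lt h]

section Multipartite

variable {a m : ℕ}

theorem multipartiteGraph_dist (hm : 2 ≤ m) (u v : Fin m × Fin a) :
    (multipartiteGraph a m).dist u v = if u = v then 0 else if u.1 = v.1 then 2 else 1 := by
  split_ifs with huv hpart
  · simp [huv]
  · have : Nontrivial (Fin m) := Fin.nontrivial_iff_two_le.mpr hm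
    obtain ⟨i, hi⟩ := exists_ne u.1
    have hu : (multipartiteGraph a m).Adj u (i, u.2) := hi.symm
    have hv : (multipartiteGraph a m).Adj (i, u.2) v :=
      show i ≠ v.1 from hpart ▸ hi
    have hle : (multipartiteGraph a m).dist u v ≤ 2 :=
      SimpleGraph.dist_le (.cons hu (.cons hv .nil))
    have hpos : (multipartiteGraph a m).dist u v ≠ 0 :=
      SimpleGraph.dist_ne_zero_iff_ne_and_reachable.mpr ⟨huv, hu.reachable.trans hv.reachable⟩
    have hne : (multipartiteGraph a m).dist u v ≠ 1 :=
      fun h => SimpleGraph.dist_eq_one_iff_adj.mp h hpart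
    omega
  · exact SimpleGraph.dist_eq_one_iff_adj.mpr hpart

def k33Addr : Fin 3 × Fin 3 → Fin 7 → Option Bool := fun v =>
  ![![![some false, some false, some false, some false, some false, some false, none],
     ![some true,  some true,  some false, some false, some false, some false, none],
     ![none,       none,       some true,  some true,  none,       none,       some false]],
    ![![some true,  some false, none,       some false, none,       none,       some false],
     ![some false, some true,  none,       some false, none,       none,       some false],
     ![none,       none,       none,       some true,  some false, some false, some true]],
    ![![none,       none,       some false, some true,  some false, some false, some false],
     ![none,       none,       none,       none,       some true,  some false, some true],
     ![none,       none,       none,       none,       some false, some true,  some true]]]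
    v.1 v.2

theorem isAddressing_k33Addr : isAddressing (multipartiteGraph 3 3) 7 k33Addr := by
  intro u v
  rw [multipartiteGraph_dist (by norm_num)]
  revert u v
  decide

variable {t s : ℕ}

-- Vertex `(finProdFinEquiv (p, k), q)` of `K(a;ms)` is vertex `(p, q)` of the `k`-th copy
-- of `K(a;m)`.
def blowUpAddr (f : Fin m × Fin a → Fin t → Option Bool) (v : Fin (m * s) × Fin a) :
    (Fin s × Fin t) ⊕ Fin (s - 1) → Option Bool :=
  Sum.elim
    (fun kj => if kj.1 = (finProdFinEquiv.symm v.1).2 then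
      f ((finProdFinEquiv.symm v.1).1, v.2) kj.2 else none)
    (completeGraphAddr s (finProdFinEquiv.symm v.1).2)

theorem addrDist_blowUpAddr (f : Fin m × Fin a → Fin t → Option Bool) (p p' : Fin m)
    (k k' : Fin s) (q q' : Fin a) :
    addrDist (blowUpAddr f) (finProdFinEquiv (p, k), q) (finProdFinEquiv (p', k'), q') =
      if k = k' then addrDist f (p, q) (p', q') else 1 := by
  have hK := isAddressing_iff.mp (isAddressing_completeGraphAddr s) k k'
  rw [SimpleGraph.dist_top] at hK
  unfold blowUpAddr
  rw [addrDist_sumElim,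
    addrDist_mask (fun v : Fin (m * s) × Fin a => (finProdFinEquiv.symm v.1).2)
      (fun v => f ((finProdFinEquiv.symm v.1).1, v.2)),
    addrDist_comp f, addrDist_comp (completeGraphAddr s)]
  simp only [Equiv.symm_apply_apply, ← hK]
  split_ifs <;> rfl

theorem isAddressing.blowUp {f : Fin m × Fin a → Fin t → Option Bool} (hm : 2 ≤ m) (hs : 0 < s)
    (hf : isAddressing (multipartiteGraph a m) t f) :
    ∃ g, isAddressing (multipartiteGraph a (m * s)) (s * t + s - 1) g := by
  let e : Fin (s * t + s - 1) ≃ (Fin s × Fin t) ⊕ Fin (s - 1) :=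
    (finCongr (by omega)).trans
      (finSumFinEquiv.symm.trans (finProdFinEquiv.symm.sumCongr (.refl _)))
  refine ⟨fun v j => blowUpAddr f v (e j), isAddressing_iff.mpr fun u v => ?_⟩
  obtain ⟨i, q⟩ := u
  obtain ⟨i', q'⟩ := v
  obtain ⟨⟨p, k⟩, rfl⟩ := finProdFinEquiv.surjective i
  obtain ⟨⟨p', k'⟩, rfl⟩ := finProdFinEquiv.surjective i'
  rw [addrDist_comp_equiv, addrDist_blowUpAddr,
    multipartiteGraph_dist (le_mul_of_le_of_one_le hm hs), ← isAddressing_iff.mp hf,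
    multipartiteGraph_dist hm]
  by_cases hk : k = k' <;> simp [hk]

end Multipartite

section DistForm

variable {V : Type*} [Fintype V]

noncomputable def distForm (G : SimpleGraph V) (x : V → ℝ) : ℝ :=
  ∑ u, ∑ v, (G.dist u v : ℝ) * x u * x v

theorem sum_sum_conflict_mul (g : V → Option Bool) (x : V → ℝ) :
    ∑ u, ∑ v, (if ∃ a b : Bool, g u = some a ∧ g v = some b ∧ a ≠ b then (1 : ℝ) else 0) *
        x u * x v =
      2 * (∑ v with g v = some false, x v) * ∑ v with g v = some true, x v := by
  have hsplit : ∀ u v,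
      (if ∃ a b : Bool, g u = some a ∧ g v = some b ∧ a ≠ b then (1 : ℝ) else 0) * x u * x v =
        (if g u = some false then x u else 0) * (if g v = some true then x v else 0) +
          (if g u = some true then x u else 0) * (if g v = some false then x v else 0) := by
    intro u v
    rcases g u with _ | _ | _ <;> rcases g v with _ | _ | _ <;> simp
  simp_rw [hsplit, sum_add_distrib, ← sum_mul_sum, ← sum_filter]
  ring

theorem isAddressing.distForm_eq_zero {G : SimpleGraph V} {N : ℕ} {f : V → Fin N → Option Bool}
    (hf : isAddressing G N f) {x : V → ℝ} (hx : ∀ j, ∑ v with f v j = some false, x v = 0) :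
    distForm G x = 0 := by
  have hcoord : distForm G x = ∑ j, ∑ u, ∑ v,
      (if ∃ a b : Bool, f u j = some a ∧ f v j = some b ∧ a ≠ b then (1 : ℝ) else 0) *
        x u * x v := by
    simp only [distForm, hf _ _, card_filter, Nat.cast_sum, Nat.cast_ite, Nat.cast_one,
      Nat.cast_zero, sum_mul]
    exact (sum_congr rfl fun u _ => Finset.sum_comm).trans Finset.sum_comm
  simp only [hcoord, sum_sum_conflict_mul, hx, mul_zero, zero_mul, sum_const_zero]

theorem isAddressing.finrank_le {G : SimpleGraph V} {N : ℕ} {f : V → Fin N → Option Bool}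
    (hf : isAddressing G N f) {W : Submodule ℝ (V → ℝ)}
    (hW : ∀ x ∈ W, x ≠ 0 → distForm G x < 0) : finrank ℝ W ≤ N := by
  by_contra! hlt
  let φ : (V → ℝ) →ₗ[ℝ] (Fin N → ℝ) :=
    LinearMap.pi fun j =>
      ∑ v with f v j = some false, LinearMap.proj (R := ℝ) (φ := fun _ : V => ℝ) v
  obtain ⟨⟨x, hxW⟩, hx, hx0⟩ := (Submodule.ne_bot_iff _).mp
    ((φ.domRestrict W).ker_ne_bot_of_finrank_lt (by simpa using hlt))
  have hzero : distForm G x = 0 := hf.distForm_eq_zero fun j => by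
    simpa [φ] using congr_fun hx j
  exact (hW x hxW (by simpa using hx0)).ne hzero

end DistForm

section MultipartiteLowerBound

variable {a m : ℕ}

def partSum (a m : ℕ) : (Fin m × Fin a → ℝ) →ₗ[ℝ] (Fin m → ℝ) :=
  LinearMap.pi fun i => ∑ p, LinearMap.proj (R := ℝ) (φ := fun _ : Fin m × Fin a => ℝ) (i, p)

theorem partSum_apply (x : Fin m × Fin a → ℝ) (i : Fin m) : partSum a m x i = ∑ p, x (i, p) := by
  simp [partSum]

theorem multipartiteGraph_distForm_of_mem_ker (hm : 2 ≤ m) {x : Fin m × Fin a → ℝ}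
    (hx : x ∈ LinearMap.ker (partSum a m)) :
    distForm (multipartiteGraph a m) x = -2 * ∑ v, x v ^ 2 := by
  have hpart (i : Fin m) : ∑ p, x (i, p) = 0 := by
    rw [← partSum_apply, LinearMap.mem_ker.mp hx, Pi.zero_apply]
  have htotal : ∑ v, x v = 0 := by
    simp [Fintype.sum_prod_type, hpart]
  have hsamePart (u : Fin m × Fin a) : ∑ v, (if u.1 = v.1 then x v else 0) = 0 := by
    rw [Fintype.sum_prod_type, sum_eq_single u.1 (fun i _ hi => by simp [Ne.symm hi]) (by simp)]
    simp [hpart]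
  have hterm (u v : Fin m × Fin a) : ((multipartiteGraph a m).dist u v : ℝ) * x u * x v =
      x u * x v + x u * (if u.1 = v.1 then x v else 0) - 2 * x u * (if u = v then x v else 0) := by
    rw [multipartiteGraph_dist hm]
    split_ifs with h h' <;> simp_all <;> ring
  have hrow (u : Fin m × Fin a) :
      ∑ v, ((multipartiteGraph a m).dist u v : ℝ) * x u * x v = -2 * x u ^ 2 := by
    simp only [hterm, sum_sub_distrib, sum_add_distrib, ← mul_sum, htotal, hsamePart, sum_ite_eq,
      mem_univ, if_true]
    ring
  simp only [distForm, hrow, ← mul_sum]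

theorem isAddressing.mul_sub_one_le {N : ℕ} {f : Fin m × Fin a → Fin N → Option Bool}
    (hm : 2 ≤ m) (hf : isAddressing (multipartiteGraph a m) N f) : m * (a - 1) ≤ N := by
  have hneg :
      ∀ x ∈ LinearMap.ker (partSum a m), x ≠ 0 → distForm (multipartiteGraph a m) x < 0 := by
    intro x hx hx0
    obtain ⟨v, hv⟩ := Function.ne_iff.mp hx0
    have hpos : 0 < ∑ v, x v ^ 2 :=
      sum_pos' (fun _ _ => sq_nonneg _) ⟨v, mem_univ v, sq_pos_of_ne_zero hv⟩
    rw [multipartiteGraph_distForm_of_mem_ker hm hx]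
    linarith
  have hker := hf.finrank_le hneg
  have hrank := (partSum a m).finrank_range_add_finrank_ker
  have hrange : finrank ℝ (LinearMap.range (partSum a m)) ≤ m := by
    simpa using Submodule.finrank_le (LinearMap.range (partSum a m))
  rw [finrank_fintype_fun_eq_card, Fintype.card_prod, Fintype.card_fin, Fintype.card_fin] at hrank
  rw [Nat.mul_sub_one]
  omega

end MultipartiteLowerBound

/-- `6s ≤ N₂(K(3;3s)) ≤ 8s − 1` for every `s ≥ 1`. -/
theorem N2_K3_bounds (s : ℕ) (hs : 1 ≤ s) :
    6 * s ≤ sInf {N : ℕ | ∃ f : Fin (3 * s) × Fin 3 → Fin N → Option Bool,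
        isAddressing (multipartiteGraph 3 (3 * s)) N f} ∧
    sInf {N : ℕ | ∃ f : Fin (3 * s) × Fin 3 → Fin N → Option Bool,
        isAddressing (multipartiteGraph 3 (3 * s)) N f} ≤ 8 * s - 1 := by
  have hupper : 8 * s - 1 ∈ {N : ℕ | ∃ f : Fin (3 * s) × Fin 3 → Fin N → Option Bool,
      isAddressing (multipartiteGraph 3 (3 * s)) N f} := by
    rw [show 8 * s - 1 = s * 7 + s - 1 by omega]
    exact isAddressing_k33Addr.blowUp (by norm_num) hs
  refine ⟨le_csInf ⟨_, hupper⟩ ?_, Nat.sInf_le hupper⟩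
  rintro N ⟨f, hf⟩
  have := hf.mul_sub_one_le (by omega)
  omega
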